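/- For two one-qubit dephasing channels determined by complex numbers f, g with |f| ≤ 1, |g| ≤ 1, the superfidelity between their Jamiołkowski states equals 1/2 + (1/2)·Re(f·ḡ) + (1/2)·√(1-|f|²)·√(1-|g|²). -/

import Mathlib

open Matrix

noncomputable def sG {N : ℕ} (ρ σ : Matrix (Fin N) (Fin N) ℂ) : ℝ :=
  (trace (ρ * σ)).re +
    Real.sqrt (1 - (trace (ρ * ρ)).re) * Real.sqrt (1 - (trace (σ * σ)).re)

/-- Jamiołkowski state of the one-qubit dephasing channel D_f. -/
noncomputable def dephJam (f : ℂ) : Matrix (Fin 4) (Fin 4) ℂ :=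
  ((1 : ℂ) / 2) • !![1, 0, 0, f; 0, 0, 0, 0; 0, 0, 0, 0; star f, 0, 0, 1]

lemma re_trace_dephJam_mul (f g : ℂ) :
    (trace (dephJam f * dephJam g)).re = 1 / 2 + 1 / 2 * (f * star g).re := by
  simp [dephJam, trace, Fin.sum_univ_four, Complex.mul_re]
  ring

lemma one_sub_re_trace_dephJam_mul_self (f : ℂ) :
    1 - (trace (dephJam f * dephJam f)).re = (1 - ‖f‖ ^ 2) / 2 := by
  rw [re_trace_dephJam_mul, Complex.star_def, Complex.mul_conj, Complex.ofReal_re,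
    Complex.normSq_eq_norm_sq]
  ring

lemma Real.sqrt_half_mul_sqrt_half (a b : ℝ) :
    √(a / 2) * √(b / 2) = 1 / 2 * √a * √b := by
  rw [Real.sqrt_div' a zero_le_two, Real.sqrt_div' b zero_le_two, div_mul_div_comm,
    Real.mul_self_sqrt zero_le_two]
  ring

theorem superfidelity_dephasing (f g : ℂ) :
    sG (dephJam f) (dephJam g) =
      1 / 2 + (1 / 2) * (f * star g).re +
        (1 / 2) * Real.sqrt (1 - ‖f‖ ^ 2) *
          Real.sqrt (1 - ‖g‖ ^ 2) := by
  rw [sG, re_trace_dephJam_mul, one_sub_re_trace_dephJam_mul_self,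
    one_sub_re_trace_dephJam_mul_self, Real.sqrt_half_mul_sqrt_half]
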